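/- Let K ≠ 0 be real, z₁,…,z_m nonzero complex numbers, and r₁,…,r_n complex numbers with |rᵢ| < 1 for all i, with n ≥ m. Then (1/2π)·∫_{−π}^{π} log₂|K·∏ᵢ₌₁^m(e^{jω} − zᵢ)/∏ᵢ₌₁ⁿ(e^{jω} − rᵢ)| dω = Σ_{i : |zᵢ| > 1} log₂|zᵢ| + log₂|K|. -/

import Mathlib

/-!
On the unit circle, `log ‖T w‖` equals `log |K| + ∑ log ‖w - zᵢ‖ - ∑ log ‖w - rᵢ‖` away from the
finitely many zeros lying on the circle, and the circle average of `log ‖w - a‖` is `log⁺ ‖a‖`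
(Jensen). The poles contribute nothing since `‖rᵢ‖ < 1`, and `log⁺ ‖zᵢ‖` vanishes unless
`‖zᵢ‖ > 1`.
-/

open MeasureTheory Real Complex

theorem circleAverage_zero_one_eq_intervalIntegral {E : Type*} [NormedAddCommGroup E]
    [NormedSpace ℝ E] (f : ℂ → E) :
    circleAverage f 0 1 = (2 * π)⁻¹ • ∫ ω in (-π)..π, f (exp (ω * I)) := by
  have hper : Function.Periodic (fun ω : ℝ => f (exp (ω * I))) (2 * π) := fun ω => by
    simp [add_mul, Complex.exp_add]
  have hshift := hper.intervalIntegral_add_eq (-π) 0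
  rw [show -π + 2 * π = π by ring, zero_add] at hshift
  simp [circleAverage_def, hshift, circleMap_zero]

theorem Finset.sum_posLog_eq_sum_filter_log {ι : Type*} (s : Finset ι) (f : ι → ℝ) :
    ∑ i ∈ s, log⁺ (f i) = ∑ i ∈ s with 1 < |f i|, Real.log (f i) := by
  rw [Finset.sum_filter]
  refine Finset.sum_congr rfl fun i _ => ?_
  split_ifs with h
  · exact posLog_eq_log h.le
  · exact (posLog_eq_zero_iff _).2 (not_lt.1 h)

section RationalFunction

variable {ι κ : Type*} [Fintype ι] [Fintype κ] {K : ℂ}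

theorem log_norm_mul_prod_div_prod (hK : K ≠ 0) {z : ι → ℂ} {r : κ → ℂ} {w : ℂ}
    (hz : ∀ i, w ≠ z i) (hr : ∀ i, w ≠ r i) :
    Real.log ‖K * (∏ i, (w - z i)) / ∏ i, (w - r i)‖ =
      Real.log ‖K‖ + ∑ i, Real.log ‖w - z i‖ - ∑ i, Real.log ‖w - r i‖ := by
  have hz' : ∀ i ∈ Finset.univ, ‖w - z i‖ ≠ 0 := fun i _ => by simpa [sub_eq_zero] using hz i
  have hr' : ∀ i ∈ Finset.univ, ‖w - r i‖ ≠ 0 := fun i _ => by simpa [sub_eq_zero] using hr i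
  have hK' : ‖K‖ ≠ 0 := norm_ne_zero_iff.2 hK
  rw [norm_div, norm_mul, norm_prod, norm_prod,
    Real.log_div (mul_ne_zero hK' (Finset.prod_ne_zero_iff.2 hz')) (Finset.prod_ne_zero_iff.2 hr'),
    Real.log_mul hK' (Finset.prod_ne_zero_iff.2 hz'), Real.log_prod hz', Real.log_prod hr']

theorem circleAverage_log_norm_mul_prod_div_prod (hK : K ≠ 0) (z : ι → ℂ) (r : κ → ℂ) :
    circleAverage (fun w => Real.log ‖K * (∏ i, (w - z i)) / ∏ i, (w - r i)‖) 0 1 =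
      Real.log ‖K‖ + ∑ i, log⁺ ‖z i‖ - ∑ i, log⁺ ‖r i‖ := by
  have hfin : (Set.range z ∪ Set.range r).Finite := (Set.finite_range z).union (Set.finite_range r)
  have hsplit : (fun w => Real.log ‖K * (∏ i, (w - z i)) / ∏ i, (w - r i)‖)
      =ᶠ[Filter.codiscreteWithin (Metric.sphere 0 |1|)]
      fun w => Real.log ‖K‖ + ∑ i, Real.log ‖w - z i‖ - ∑ i, Real.log ‖w - r i‖ := by
    filter_upwards [Filter.codiscreteWithin_mono (Set.subset_univ _) hfin.compl_mem_codiscrete]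
      with w hw
    simp only [Set.mem_compl_iff, Set.mem_union, Set.mem_range, not_or, not_exists] at hw
    exact log_norm_mul_prod_div_prod hK (fun i h => hw.1 i h.symm) (fun i h => hw.2 i h.symm)
  rw [circleAverage_congr_codiscreteWithin hsplit one_ne_zero, circleAverage_fun_sub,
    circleAverage_fun_add, circleAverage_const, circleAverage_fun_sum, circleAverage_fun_sum]
  · simp only [circleAverage_log_norm_sub_const_eq_posLog]
  all_goals fun_prop

end RationalFunction

theorem discrete_time_CSBI_general (m n : ℕ) (K : ℝ) (hK : K ≠ 0)
    (z : Fin m → ℂ)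
    (r : Fin n → ℂ) (hr : ∀ i, Norm.norm (r i) < 1) :
    (1 / (2 * π)) * ∫ ω in (-π)..π,
        Real.logb 2 (Norm.norm ((K : ℂ) * (∏ i, (Complex.exp ((ω : ℂ) * Complex.I) - z i)) /
          (∏ i, (Complex.exp ((ω : ℂ) * Complex.I) - r i)))) =
      (∑ i ∈ Finset.univ.filter (fun i => 1 < Norm.norm (z i)),
        Real.logb 2 (Norm.norm (z i))) + Real.logb 2 |K| := by
  set T : ℂ → ℂ := fun w => K * (∏ i, (w - z i)) / ∏ i, (w - r i)
  have hpoles : ∑ i, log⁺ ‖r i‖ = 0 :=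
    Finset.sum_eq_zero fun i _ => (posLog_eq_zero_iff _).2 (by simpa using (hr i).le)
  have hzeros : ∑ i, log⁺ ‖z i‖ = ∑ i with 1 < ‖z i‖, Real.log ‖z i‖ := by
    simpa only [abs_norm] using Finset.univ.sum_posLog_eq_sum_filter_log fun i => ‖z i‖
  calc _ = circleAverage (fun w => Real.logb 2 ‖T w‖) 0 1 := by
        rw [circleAverage_zero_one_eq_intervalIntegral, one_div, smul_eq_mul]
    _ = (Real.log 2)⁻¹ * circleAverage (fun w => Real.log ‖T w‖) 0 1 := by
        simp only [Real.logb, div_eq_inv_mul, ← smul_eq_mul, circleAverage_fun_smul]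
    _ = _ := by
        rw [circleAverage_log_norm_mul_prod_div_prod (Complex.ofReal_ne_zero.2 hK), hpoles, hzeros,
          Complex.norm_real, Real.norm_eq_abs]
        simp only [Real.logb, ← Finset.sum_div]
        ring

theorem discrete_time_CSBI (m n : ℕ) (hmn : m ≤ n) (K : ℝ) (hK : K ≠ 0)
    (z : Fin m → ℂ) (hz : ∀ i, z i ≠ 0)
    (r : Fin n → ℂ) (hr : ∀ i, Norm.norm (r i) < 1) :
    (1 / (2 * π)) * ∫ ω in (-π)..π,
        Real.logb 2 (Norm.norm ((K : ℂ) * (∏ i, (Complex.exp ((ω : ℂ) * Complex.I) - z i)) /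
          (∏ i, (Complex.exp ((ω : ℂ) * Complex.I) - r i)))) =
      (∑ i ∈ Finset.univ.filter (fun i => 1 < Norm.norm (z i)),
        Real.logb 2 (Norm.norm (z i))) + Real.logb 2 |K| :=
  discrete_time_CSBI_general m n K hK z r hr
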